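/- arXiv:2005.11836 — 2 statements merged into one kernel-verified Lean document; each statement's English description precedes it below -/
import Mathlib

section
/- Let L > 0, T > 0 and let w : ℝ² → ℝ be infinitely differentiable on an open neighborhood of [0,L]×[0,T], satisfying w(0,t) = w_x(0,t) = 0 for all t ∈ [0,T]. With u(x,t) = −(1/2)∫₀ˣ w_x(ξ,t)² dξ (so u_t(x,t) = −∫₀ˣ w_x w_xt dξ and u_tt(x,t) = −∫₀ˣ [w_xt² + w_x w_xtt] dξ), one has for every t ∈ [0,T]: ∫₀ᴸ ∂_x[ w_x(x,t) ∫ₓᴸ u_tt(ξ,t) dξ ] · w_t(x,t) dx = (1/2) (d/dt) ∫₀ᴸ u_t(x,t)² dx. -/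
open MeasureTheory Set

/-- Spatial partial derivative of a function of `(x, t)`. -/
noncomputable def pdx (f : ℝ → ℝ → ℝ) : ℝ → ℝ → ℝ := fun x t => deriv (fun y => f y t) x

/-- Temporal partial derivative of a function of `(x, t)`. -/
noncomputable def pdt (f : ℝ → ℝ → ℝ) : ℝ → ℝ → ℝ := fun x t => deriv (fun s => f x s) t

/-- `u_t(x,t) = -∫₀ˣ w_x w_xt dξ`. -/
noncomputable def utF (w : ℝ → ℝ → ℝ) : ℝ → ℝ → ℝ := fun x t =>
  -∫ ξ in (0:ℝ)..x, pdx w ξ t * pdt (pdx w) ξ t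

/-- `u_tt(x,t) = -∫₀ˣ [w_xt² + w_x w_xtt] dξ`. -/
noncomputable def uttF (w : ℝ → ℝ → ℝ) : ℝ → ℝ → ℝ := fun x t =>
  -∫ ξ in (0:ℝ)..x, ((pdt (pdx w) ξ t) ^ 2 + pdx w ξ t * pdt (pdt (pdx w)) ξ t)


/-!
Write `a = w_x` and `G(x) = ∫ₓᴸ u_tt`. Integrating by parts in `x`, with `w_tx = w_xt`,
`G(L) = 0` and `a(0, t) = 0`, turns the left side into `-∫₀ᴸ G a w_xt = ∫₀ᴸ G ∂ₓu_t`; a second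
integration by parts, now with `u_t(0, t) = 0` and `G' = -u_tt`, gives `∫₀ᴸ u_t u_tt`, which is
`(1/2) d/dt ∫₀ᴸ u_t²` by differentiation under the integral sign.

Both sides only see `w` near `[0, L] × {t}`, so `w` may first be replaced by a globally smooth
function (a smooth cutoff times `w`) that agrees with it on a box around that segment.
-/

open Function Filter Topology

section PartialDerivatives

variable {f g : ℝ → ℝ → ℝ}

lemma hasDerivAt_pdx (hf : Differentiable ℝ (uncurry f)) (x t : ℝ) :
    HasDerivAt (f · t) (pdx f x t) x :=
  (hf.comp (differentiable_id.prodMk (differentiable_const t)) x).hasDerivAt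

lemma hasDerivAt_pdt (hf : Differentiable ℝ (uncurry f)) (x t : ℝ) :
    HasDerivAt (f x) (pdt f x t) t :=
  (hf.comp ((differentiable_const x).prodMk differentiable_id) t).hasDerivAt

lemma uncurry_pdx_eq (hf : Differentiable ℝ (uncurry f)) :
    uncurry (pdx f) = fun p => fderiv ℝ (uncurry f) p (1, 0) := by
  ext ⟨x, t⟩
  exact ((hf _).hasFDerivAt.comp_hasDerivAt x
    ((hasDerivAt_id x).prodMk (hasDerivAt_const x t))).deriv

lemma uncurry_pdt_eq (hf : Differentiable ℝ (uncurry f)) :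
    uncurry (pdt f) = fun p => fderiv ℝ (uncurry f) p (0, 1) := by
  ext ⟨x, t⟩
  exact ((hf _).hasFDerivAt.comp_hasDerivAt t
    ((hasDerivAt_const t x).prodMk (hasDerivAt_id t))).deriv

section Smoothness

variable {m n : WithTop ℕ∞}

lemma ContDiff.uncurry_pdx (hf : ContDiff ℝ n (uncurry f)) (hmn : m + 1 ≤ n) :
    ContDiff ℝ m (uncurry (pdx f)) := by
  rw [uncurry_pdx_eq ((hf.of_le (le_add_self.trans hmn)).differentiable one_ne_zero)]
  exact (hf.fderiv_right hmn).clm_apply contDiff_const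

lemma ContDiff.uncurry_pdt (hf : ContDiff ℝ n (uncurry f)) (hmn : m + 1 ≤ n) :
    ContDiff ℝ m (uncurry (pdt f)) := by
  rw [uncurry_pdt_eq ((hf.of_le (le_add_self.trans hmn)).differentiable one_ne_zero)]
  exact (hf.fderiv_right hmn).clm_apply contDiff_const

end Smoothness

lemma fderiv_fderiv_apply_eq {F : ℝ × ℝ → ℝ} (hF : ContDiff ℝ 2 F) (p v w : ℝ × ℝ) :
    fderiv ℝ (fun q => fderiv ℝ F q v) p w = fderiv ℝ (fderiv ℝ F) p w v := by
  have hd := (hF.fderiv_right (m := 1) (by norm_num)).differentiable one_ne_zero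
  rw [fderiv_clm_apply (hd p) (differentiableAt_const v)]
  simp

lemma pdt_pdx_eq_pdx_pdt (hf : ContDiff ℝ 2 (uncurry f)) (x t : ℝ) :
    pdt (pdx f) x t = pdx (pdt f) x t := by
  have hd := hf.differentiable two_ne_zero
  have e₁ := congrFun (uncurry_pdt_eq
    ((hf.uncurry_pdx (m := 1) (by norm_num)).differentiable one_ne_zero)) (x, t)
  have e₂ := congrFun (uncurry_pdx_eq
    ((hf.uncurry_pdt (m := 1) (by norm_num)).differentiable one_ne_zero)) (x, t)
  simp only [uncurry_apply_pair] at e₁ e₂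
  rw [e₁, e₂, uncurry_pdx_eq hd, uncurry_pdt_eq hd, fderiv_fderiv_apply_eq hf,
    fderiv_fderiv_apply_eq hf]
  exact hf.contDiffAt.isSymmSndFDerivAt (by simp) _ _

variable {V : Set (ℝ × ℝ)}

lemma Set.EqOn.uncurry_pdx (h : EqOn (uncurry f) (uncurry g) V) (hV : IsOpen V) :
    EqOn (uncurry (pdx f)) (uncurry (pdx g)) V := fun _ hp =>
  EventuallyEq.deriv_eq <| mem_of_superset
    ((hV.preimage (continuous_id.prodMk continuous_const)).mem_nhds hp) fun _ hy => h hy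

lemma Set.EqOn.uncurry_pdt (h : EqOn (uncurry f) (uncurry g) V) (hV : IsOpen V) :
    EqOn (uncurry (pdt f)) (uncurry (pdt g)) V := fun _ hp =>
  EventuallyEq.deriv_eq <| mem_of_superset
    ((hV.preimage (continuous_const.prodMk continuous_id)).mem_nhds hp) fun _ hy => h hy

end PartialDerivatives

section ParametricIntegral

lemma continuous_uncurry_primitive {g : ℝ → ℝ → ℝ} (hg : Continuous (uncurry g)) (a : ℝ) :
    Continuous (uncurry fun x s => ∫ ξ in a..x, g ξ s) :=
  intervalIntegral.continuous_parametric_intervalIntegral_of_continuous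
    (f := fun (p : ℝ × ℝ) ξ => g ξ p.2)
    (hg.comp (continuous_snd.prodMk (continuous_snd.comp continuous_fst))) continuous_fst

theorem hasDerivAt_intervalIntegral_of_continuous_uncurry {F F' : ℝ → ℝ → ℝ}
    (hF : ∀ s, Continuous (F · s)) (hF' : Continuous (uncurry F'))
    (hderiv : ∀ x s, HasDerivAt (F x) (F' x s) s) (a b t : ℝ) :
    HasDerivAt (fun s => ∫ x in a..b, F x s) (∫ x in a..b, F' x t) t := by
  obtain ⟨M, hM⟩ := (isCompact_uIcc.prod (isCompact_closedBall t 1)).exists_bound_of_continuousOn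
    hF'.continuousOn
  refine (intervalIntegral.hasDerivAt_integral_of_dominated_loc_of_deriv_le
    (bound := fun _ => M) (Metric.ball_mem_nhds t one_pos)
    (Eventually.of_forall fun s => (hF s).aestronglyMeasurable)
    ((hF t).intervalIntegrable _ _)
    (hF'.comp (continuous_id.prodMk continuous_const)).aestronglyMeasurable
    (Eventually.of_forall fun x hx s hs =>
      hM (x, s) ⟨uIoc_subset_uIcc hx, Metric.ball_subset_closedBall hs⟩)
    intervalIntegrable_const (Eventually.of_forall fun x _ s _ => hderiv x s)).2

end ParametricIntegral

section Localization

open Manifold in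
theorem ContDiffOn.exists_contDiff_eqOn {E F : Type*} [NormedAddCommGroup E] [NormedSpace ℝ E]
    [FiniteDimensional ℝ E] [NormedAddCommGroup F] [NormedSpace ℝ F] {f : E → F} {U K : Set E}
    {n : ℕ∞} (hf : ContDiffOn ℝ n f U) (hU : IsOpen U) (hK : IsCompact K) (hKU : K ⊆ U) :
    ∃ g : E → F, ContDiff ℝ n g ∧ EqOn g f K := by
  obtain ⟨δ, hδ, hδU⟩ := hK.exists_cthickening_subset_open hU hKU
  have hKint : K ⊆ interior (Metric.cthickening δ K) :=
    (Metric.self_subset_thickening hδ K).trans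
      (interior_maximal (Metric.thickening_subset_cthickening δ K) Metric.isOpen_thickening)
  obtain ⟨χ, hχ1, hχ0, -⟩ :=
    exists_contMDiffMap_one_nhds_of_subset_interior 𝓘(ℝ, E) (n := n) hK.isClosed hKint
  have hχ : ContDiff ℝ n χ := contMDiff_iff_contDiff.1 χ.contMDiff
  refine ⟨fun x => χ x • f x, contDiff_iff_contDiffAt.2 fun x => ?_, fun x hx => ?_⟩
  · by_cases hx : x ∈ U
    · exact hχ.contDiffAt.smul (hf.contDiffAt (hU.mem_nhds hx))
    · have hout : (Metric.cthickening δ K)ᶜ ∈ 𝓝 x :=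
        Metric.isClosed_cthickening.isOpen_compl.mem_nhds fun h => hx (hδU h)
      refine (contDiffAt_const (c := (0 : F))).congr_of_eventuallyEq ?_
      filter_upwards [hout] with y hy
      simp [hχ0 y hy]
  · simp [hχ1.self_of_nhdsSet x hx]

lemma exists_Icc_subset_of_mem_nhdsSet_Icc {a b : ℝ} (hab : a ≤ b) {A : Set ℝ}
    (hA : A ∈ 𝓝ˢ (Icc a b)) : ∃ ε > 0, Icc (a - ε) (b + ε) ⊆ A := by
  rw [nhdsSet_Icc hab, mem_sup, mem_sup, mem_principal] at hA
  obtain ⟨⟨ha, hb⟩, hmid⟩ := hA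
  obtain ⟨ε₁, hε₁, h₁⟩ := Metric.nhds_basis_closedBall.mem_iff.1 ha
  obtain ⟨ε₂, hε₂, h₂⟩ := Metric.nhds_basis_closedBall.mem_iff.1 hb
  rw [Real.closedBall_eq_Icc] at h₁ h₂
  refine ⟨min ε₁ ε₂, lt_min hε₁ hε₂, fun x ⟨hx₁, hx₂⟩ => ?_⟩
  have := min_le_left ε₁ ε₂
  have := min_le_right ε₁ ε₂
  rcases le_or_gt x a with hxa | hxa
  · exact h₁ ⟨by linarith, by linarith⟩
  rcases le_or_gt b x with hbx | hbx
  · exact h₂ ⟨by linarith, by linarith⟩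
  exact hmid ⟨hxa, hbx⟩

lemma exists_Icc_prod_Icc_subset {a b c d : ℝ} (hab : a ≤ b) (hcd : c ≤ d) {U : Set (ℝ × ℝ)}
    (hU : IsOpen U) (h : Icc a b ×ˢ Icc c d ⊆ U) :
    ∃ ε > 0, Icc (a - ε) (b + ε) ×ˢ Icc (c - ε) (d + ε) ⊆ U := by
  have hU' : U ∈ 𝓝ˢ (Icc a b) ×ˢ 𝓝ˢ (Icc c d) := by
    rw [← isCompact_Icc.nhdsSet_prod_eq isCompact_Icc]
    exact hU.mem_nhdsSet.2 h
  obtain ⟨A, hA, B, hB, hAB⟩ := mem_prod_iff.1 hU'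
  obtain ⟨ε₁, hε₁, h₁⟩ := exists_Icc_subset_of_mem_nhdsSet_Icc hab hA
  obtain ⟨ε₂, hε₂, h₂⟩ := exists_Icc_subset_of_mem_nhdsSet_Icc hcd hB
  have := min_le_left ε₁ ε₂
  have := min_le_right ε₁ ε₂
  refine ⟨min ε₁ ε₂, lt_min hε₁ hε₂, (Set.prod_mono ?_ ?_).trans ((Set.prod_mono h₁ h₂).trans hAB)⟩
  · exact Icc_subset_Icc (by linarith) (by linarith)
  · exact Icc_subset_Icc (by linarith) (by linarith)

end Localization

section InextensibleCantilever

variable {w : ℝ → ℝ → ℝ}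

lemma continuous_uncurry_utF (hw : ContDiff ℝ 2 (uncurry w)) : Continuous (uncurry (utF w)) := by
  have ha := hw.uncurry_pdx (m := 1) (by norm_num)
  have hb := ha.uncurry_pdt (m := 0) (by norm_num)
  exact (continuous_uncurry_primitive (g := fun ξ s => pdx w ξ s * pdt (pdx w) ξ s)
    (by fun_prop) 0).neg

lemma continuous_uncurry_uttF (hw : ContDiff ℝ 3 (uncurry w)) :
    Continuous (uncurry (uttF w)) := by
  have ha := hw.uncurry_pdx (m := 2) (by norm_num)
  have hb := ha.uncurry_pdt (m := 1) (by norm_num)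
  have hc := hb.uncurry_pdt (m := 0) (by norm_num)
  exact (continuous_uncurry_primitive
    (g := fun ξ s => pdt (pdx w) ξ s ^ 2 + pdx w ξ s * pdt (pdt (pdx w)) ξ s) (by fun_prop) 0).neg

lemma hasDerivAt_utF_space (hw : ContDiff ℝ 2 (uncurry w)) (x t : ℝ) :
    HasDerivAt (utF w · t) (-(pdx w x t * pdt (pdx w) x t)) x := by
  have ha := hw.uncurry_pdx (m := 1) (by norm_num)
  have hb := ha.uncurry_pdt (m := 0) (by norm_num)
  have hab : Continuous fun ξ => pdx w ξ t * pdt (pdx w) ξ t := by fun_prop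
  exact (hab.integral_hasStrictDerivAt 0 x).hasDerivAt.neg

lemma hasDerivAt_utF_time (hw : ContDiff ℝ 3 (uncurry w)) (x t : ℝ) :
    HasDerivAt (utF w x) (uttF w x t) t := by
  have ha := hw.uncurry_pdx (m := 2) (by norm_num)
  have hb := ha.uncurry_pdt (m := 1) (by norm_num)
  have hc := hb.uncurry_pdt (m := 0) (by norm_num)
  refine (hasDerivAt_intervalIntegral_of_continuous_uncurry
    (F' := fun ξ s => pdt (pdx w) ξ s ^ 2 + pdx w ξ s * pdt (pdt (pdx w)) ξ s)
    (fun s => by fun_prop) (by fun_prop) (fun ξ s => ?_) 0 x t).neg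
  exact ((hasDerivAt_pdt (ha.differentiable two_ne_zero) ξ s).mul
    (hasDerivAt_pdt (hb.differentiable one_ne_zero) ξ s)).congr_deriv (by ring)

lemma hasDerivAt_integral_utF_sq (hw : ContDiff ℝ 3 (uncurry w)) (a b t : ℝ) :
    HasDerivAt (fun s => ∫ x in a..b, utF w x s ^ 2)
      (∫ x in a..b, 2 * utF w x t * uttF w x t) t := by
  have hu := continuous_uncurry_utF (hw.of_le (by norm_num))
  have hv := continuous_uncurry_uttF hw
  refine hasDerivAt_intervalIntegral_of_continuous_uncurry
    (F' := fun x s => 2 * utF w x s * uttF w x s)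
    (fun s => by fun_prop) (by fun_prop) (fun x s => ?_) a b t
  exact ((hasDerivAt_utF_time hw x s).pow 2).congr_deriv (by ring)

lemma hasDerivAt_integral_uttF_tail (hw : ContDiff ℝ 3 (uncurry w)) (L t y : ℝ) :
    HasDerivAt (fun y => ∫ ξ in y..L, uttF w ξ t) (-uttF w y t) y := by
  have hv : Continuous (uttF w · t) :=
    (continuous_uncurry_uttF hw).comp (continuous_id.prodMk continuous_const)
  exact intervalIntegral.integral_hasDerivAt_left (hv.intervalIntegrable _ _)
    (hv.stronglyMeasurableAtFilter _ _) hv.continuousAt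

lemma integral_uttF_tail_mul_pdx_utF (hw : ContDiff ℝ 3 (uncurry w)) (L t : ℝ) :
    ∫ x in (0:ℝ)..L, (∫ ξ in x..L, uttF w ξ t) * -(pdx w x t * pdt (pdx w) x t)
      = ∫ x in (0:ℝ)..L, utF w x t * uttF w x t := by
  have ha := hw.uncurry_pdx (m := 2) (by norm_num)
  have hb := ha.uncurry_pdt (m := 1) (by norm_num)
  have hv := continuous_uncurry_uttF hw
  have ibp := intervalIntegral.integral_mul_deriv_eq_deriv_mul (a := 0) (b := L)
    (fun x _ => hasDerivAt_integral_uttF_tail hw L t x)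
    (fun x _ => hasDerivAt_utF_space (hw.of_le (by norm_num)) x t)
    (Continuous.intervalIntegrable (by fun_prop) _ _)
    (Continuous.intervalIntegrable (by fun_prop) _ _)
  have hu0 : utF w 0 t = 0 := by simp [utF]
  rw [ibp, intervalIntegral.integral_same, hu0, zero_mul, mul_zero, sub_zero, zero_sub,
    ← intervalIntegral.integral_neg]
  exact intervalIntegral.integral_congr fun x _ => by ring

theorem integral_pdx_inertia_mul_pdt (hw : ContDiff ℝ 3 (uncurry w)) (L t : ℝ)
    (h0 : pdx w 0 t = 0) :
    ∫ x in (0:ℝ)..L, pdx (fun y s => pdx w y s * ∫ ξ in y..L, uttF w ξ s) x t * pdt w x t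
      = ∫ x in (0:ℝ)..L, utF w x t * uttF w x t := by
  have ha := hw.uncurry_pdx (m := 2) (by norm_num)
  have hb := ha.uncurry_pdt (m := 1) (by norm_num)
  have hax := ha.uncurry_pdx (m := 1) (by norm_num)
  have hv := continuous_uncurry_uttF hw
  set G : ℝ → ℝ := fun y => ∫ ξ in y..L, uttF w ξ t
  have hG := hasDerivAt_integral_uttF_tail hw L t
  have hGc : Continuous G := continuous_iff_continuousAt.2 fun y => (hG y).continuousAt
  have hN : ∀ y, HasDerivAt (fun y => pdx w y t * G y)
      (pdx (pdx w) y t * G y + pdx w y t * -uttF w y t) y := fun y =>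
    (hasDerivAt_pdx (ha.differentiable two_ne_zero) y t).mul (hG y)
  have hwt : ∀ x, HasDerivAt (pdt w · t) (pdt (pdx w) x t) x := fun x => by
    rw [pdt_pdx_eq_pdx_pdt (hw.of_le (by norm_num))]
    exact hasDerivAt_pdx ((hw.uncurry_pdt (m := 2) (by norm_num)).differentiable two_ne_zero) x t
  have ibp := intervalIntegral.integral_mul_deriv_eq_deriv_mul (a := 0) (b := L)
    (fun x _ => hN x) (fun x _ => hwt x)
    (Continuous.intervalIntegrable (by fun_prop) _ _)
    (Continuous.intervalIntegrable (by fun_prop) _ _)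
  have hGL : G L = 0 := intervalIntegral.integral_same
  simp only [hGL, h0, zero_mul, mul_zero, sub_zero, zero_sub] at ibp
  calc ∫ x in (0:ℝ)..L, pdx (fun y s => pdx w y s * ∫ ξ in y..L, uttF w ξ s) x t * pdt w x t
      = ∫ x in (0:ℝ)..L, (pdx (pdx w) x t * G x + pdx w x t * -uttF w x t) * pdt w x t :=
        intervalIntegral.integral_congr fun x _ => by rw [← (hN x).deriv]; rfl
    _ = -∫ x in (0:ℝ)..L, pdx w x t * G x * pdt (pdx w) x t := by rw [ibp, neg_neg]
    _ = ∫ x in (0:ℝ)..L, G x * -(pdx w x t * pdt (pdx w) x t) := by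
        rw [← intervalIntegral.integral_neg]
        exact intervalIntegral.integral_congr fun x _ => by ring
    _ = ∫ x in (0:ℝ)..L, utF w x t * uttF w x t := integral_uttF_tail_mul_pdx_utF hw L t

theorem inertia_velocity_multiplier_of_contDiff (hw : ContDiff ℝ 3 (uncurry w))
    (L t : ℝ) (h0 : pdx w 0 t = 0) :
    (∫ x in (0:ℝ)..L,
        pdx (fun y s => pdx w y s * ∫ ξ in y..L, uttF w ξ s) x t * pdt w x t)
      = (1/2) * deriv (fun s => ∫ x in (0:ℝ)..L, (utF w x s) ^ 2) t := by
  rw [integral_pdx_inertia_mul_pdt hw L t h0, (hasDerivAt_integral_utF_sq hw 0 L t).deriv,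
    ← intervalIntegral.integral_const_mul]
  exact intervalIntegral.integral_congr fun x _ => by ring

variable {w' : ℝ → ℝ → ℝ} {I J : Set ℝ} [I.OrdConnected] {L t : ℝ}

lemma Set.EqOn.uncurry_utF (h : EqOn (uncurry w) (uncurry w') (I ×ˢ J)) (hV : IsOpen (I ×ˢ J))
    (h0 : 0 ∈ I) : EqOn (uncurry (utF w)) (uncurry (utF w')) (I ×ˢ J) := by
  rintro ⟨x, s⟩ ⟨hx, hs⟩
  have ha := h.uncurry_pdx hV
  have hb := ha.uncurry_pdt hV
  refine congrArg Neg.neg (intervalIntegral.integral_congr fun ξ hξ => ?_)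
  have hξ := mk_mem_prod (Set.OrdConnected.uIcc_subset ‹_› h0 hx hξ) hs
  exact congrArg₂ (· * ·) (ha hξ) (hb hξ)

lemma Set.EqOn.uncurry_uttF (h : EqOn (uncurry w) (uncurry w') (I ×ˢ J)) (hV : IsOpen (I ×ˢ J))
    (h0 : 0 ∈ I) : EqOn (uncurry (uttF w)) (uncurry (uttF w')) (I ×ˢ J) := by
  rintro ⟨x, s⟩ ⟨hx, hs⟩
  have ha := h.uncurry_pdx hV
  have hb := ha.uncurry_pdt hV
  have hc := hb.uncurry_pdt hV
  refine congrArg Neg.neg (intervalIntegral.integral_congr fun ξ hξ => ?_)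
  have hξ := mk_mem_prod (Set.OrdConnected.uIcc_subset ‹_› h0 hx hξ) hs
  exact congrArg₂ (· + ·) (congrArg (· ^ 2) (hb hξ)) (congrArg₂ (· * ·) (ha hξ) (hc hξ))

lemma integral_pdx_inertia_mul_pdt_congr (h : EqOn (uncurry w) (uncurry w') (I ×ˢ J))
    (hI : IsOpen I) (hJ : IsOpen J) (h0 : 0 ∈ I) (hL : L ∈ I) (ht : t ∈ J) :
    ∫ x in (0:ℝ)..L, pdx (fun y s => pdx w y s * ∫ ξ in y..L, uttF w ξ s) x t * pdt w x t
      = ∫ x in (0:ℝ)..L,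
          pdx (fun y s => pdx w' y s * ∫ ξ in y..L, uttF w' ξ s) x t * pdt w' x t := by
  have hV := hI.prod hJ
  have hΦ : EqOn (uncurry fun y s => pdx w y s * ∫ ξ in y..L, uttF w ξ s)
      (uncurry fun y s => pdx w' y s * ∫ ξ in y..L, uttF w' ξ s) (I ×ˢ J) := by
    rintro ⟨y, s⟩ ⟨hy, hs⟩
    refine congrArg₂ (· * ·) (h.uncurry_pdx hV (mk_mem_prod hy hs))
      (intervalIntegral.integral_congr fun ξ hξ => ?_)
    exact h.uncurry_uttF hV h0 (mk_mem_prod (Set.OrdConnected.uIcc_subset ‹_› hy hL hξ) hs)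
  refine intervalIntegral.integral_congr fun x hx => ?_
  have hx := mk_mem_prod (Set.OrdConnected.uIcc_subset ‹_› h0 hL hx) ht
  exact congrArg₂ (· * ·) (hΦ.uncurry_pdx hV hx) (h.uncurry_pdt hV hx)

lemma deriv_integral_utF_sq_congr (h : EqOn (uncurry w) (uncurry w') (I ×ˢ J))
    (hI : IsOpen I) (hJ : IsOpen J) (h0 : 0 ∈ I) (hL : L ∈ I) (ht : t ∈ J) :
    deriv (fun s => ∫ x in (0:ℝ)..L, (utF w x s) ^ 2) t
      = deriv (fun s => ∫ x in (0:ℝ)..L, (utF w' x s) ^ 2) t := by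
  refine EventuallyEq.deriv_eq ?_
  filter_upwards [hJ.mem_nhds ht] with s hs
  exact intervalIntegral.integral_congr fun x hx => congrArg (· ^ 2)
    (h.uncurry_utF (hI.prod hJ) h0 (mk_mem_prod (Set.OrdConnected.uIcc_subset ‹_› h0 hL hx) hs))

end InextensibleCantilever

theorem inertia_velocity_multiplier_general
    (L T : ℝ) (hL : 0 < L) (w : ℝ → ℝ → ℝ)
    (U : Set (ℝ × ℝ)) (hUo : IsOpen U) (hUs : Icc (0:ℝ) L ×ˢ Icc (0:ℝ) T ⊆ U)
    (hw : ContDiffOn ℝ (⊤ : ℕ∞) (fun q : ℝ × ℝ => w q.1 q.2) U)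
    (hbc : ∀ t ∈ Icc (0:ℝ) T, w 0 t = 0 ∧ pdx w 0 t = 0) :
    ∀ t ∈ Icc (0:ℝ) T,
      (∫ x in (0:ℝ)..L,
          pdx (fun y s => pdx w y s * ∫ ξ in y..L, uttF w ξ s) x t * pdt w x t)
        = (1/2) * deriv (fun s => ∫ x in (0:ℝ)..L, (utF w x s) ^ 2) t := by
  intro t ht
  obtain ⟨ε, hε, hbox⟩ := exists_Icc_prod_Icc_subset hL.le le_rfl hUo
    ((Set.prod_mono le_rfl (Icc_subset_Icc ht.1 ht.2)).trans hUs)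
  obtain ⟨g, hg, hgw⟩ := hw.exists_contDiff_eqOn hUo (isCompact_Icc.prod isCompact_Icc) hbox
  have hwg : EqOn (uncurry w) (uncurry (curry g)) (Ioo (0 - ε) (L + ε) ×ˢ Ioo (t - ε) (t + ε)) :=
    fun p hp => (hgw (Set.prod_mono Ioo_subset_Icc_self Ioo_subset_Icc_self hp)).symm
  have h0 : (0 : ℝ) ∈ Ioo (0 - ε) (L + ε) := ⟨by linarith, by linarith⟩
  have hL' : L ∈ Ioo (0 - ε) (L + ε) := ⟨by linarith, by linarith⟩
  have ht' : t ∈ Ioo (t - ε) (t + ε) := ⟨by linarith, by linarith⟩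
  rw [integral_pdx_inertia_mul_pdt_congr hwg isOpen_Ioo isOpen_Ioo h0 hL' ht',
    deriv_integral_utF_sq_congr hwg isOpen_Ioo isOpen_Ioo h0 hL' ht']
  refine inertia_velocity_multiplier_of_contDiff (hg.of_le (WithTop.coe_le_coe.2 le_top)) L t ?_
  exact (hwg.uncurry_pdx (isOpen_Ioo.prod isOpen_Ioo) (mk_mem_prod h0 ht')).symm.trans (hbc t ht).2

/-- Pairing the nonlinear inertial term `∂ₓ(w_x ∫ₓᴸ u_tt dξ)` against the velocity
multiplier `w_t` yields the conserved quantity `(1/2)(d/dt)‖u_t‖²`. -/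
theorem inertia_velocity_multiplier
    (L T : ℝ) (hL : 0 < L) (hT : 0 < T) (w : ℝ → ℝ → ℝ)
    (U : Set (ℝ × ℝ)) (hUo : IsOpen U) (hUs : Icc (0:ℝ) L ×ˢ Icc (0:ℝ) T ⊆ U)
    (hw : ContDiffOn ℝ (⊤ : ℕ∞) (fun q : ℝ × ℝ => w q.1 q.2) U)
    (hbc : ∀ t ∈ Icc (0:ℝ) T, w 0 t = 0 ∧ pdx w 0 t = 0) :
    ∀ t ∈ Icc (0:ℝ) T,
      (∫ x in (0:ℝ)..L,
          pdx (fun y s => pdx w y s * ∫ ξ in y..L, uttF w ξ s) x t * pdt w x t)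
        = (1/2) * deriv (fun s => ∫ x in (0:ℝ)..L, (utF w x s) ^ 2) t :=
  inertia_velocity_multiplier_general L T hL w U hUo hUs hw hbc
end

section
/- Let w be a classical solution of the stiffness-only inextensible cantilever system with forcing p. Define the energy E₀(t) = (1/2)‖w_t(t)‖² + (D/2)‖w_xx(t)‖² + (D/2)‖(w_x w_xx)(t)‖². Then for all t ∈ [0,T]: E₀(t) = E₀(0) + ∫₀ᵗ ∫₀ᴸ p(x,τ) w_t(x,τ) dx dτ. -/
open MeasureTheory Set

/-- The stiffness-only inextensible cantilever operator
`w_tt + D ∂ₓ⁴w - D ∂ₓ(w_xx² w_x) + D ∂ₓ²(w_x² w_xx)`. -/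
noncomputable def stiffOp (D : ℝ) (w : ℝ → ℝ → ℝ) : ℝ → ℝ → ℝ := fun x t =>
  pdt (pdt w) x t + D * pdx (pdx (pdx (pdx w))) x t
    - D * pdx (fun y s => (pdx (pdx w) y s) ^ 2 * pdx w y s) x t
    + D * pdx (pdx (fun y s => (pdx w y s) ^ 2 * pdx (pdx w) y s)) x t

/-- A classical solution of the stiffness-only inextensible cantilever system on
`[0,L] × [0,T]` with forcing `p`: smooth on an open neighborhood of `[0,L] × [0,T]`,
satisfying the PDE pointwise and the clamped-free boundary conditions. -/
def IsStiffSol (L D T : ℝ) (p w : ℝ → ℝ → ℝ) : Prop :=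
  (∃ U : Set (ℝ × ℝ), IsOpen U ∧ Icc (0:ℝ) L ×ˢ Icc (0:ℝ) T ⊆ U ∧
      ContDiffOn ℝ (⊤ : ℕ∞) (fun q : ℝ × ℝ => w q.1 q.2) U) ∧
  (∀ x ∈ Icc (0:ℝ) L, ∀ t ∈ Icc (0:ℝ) T, stiffOp D w x t = p x t) ∧
  (∀ t ∈ Icc (0:ℝ) T,
    w 0 t = 0 ∧ pdx w 0 t = 0 ∧ pdx (pdx w) L t = 0 ∧ pdx (pdx (pdx w)) L t = 0)

/-!
Multiplying the equation by `w_t` turns it into a local conservation law `∂ₜe = p w_t + ∂ₓF` for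
the energy density `e` and a flux `F` that is a polynomial in derivatives of `w` (moving `∂ₜ` past
`∂ₓ` by symmetry of second derivatives). The clamped end forces `w_t = w_xt = 0`, and the free end
forces `w_xx = w_xxx = (w_x² w_xx)_x = 0`, so `F` vanishes at both ends. Integrating the
conservation law over `[0, L] × [0, t]`, with Fubini to swap the integrals, gives the identity.
-/

open Topology
open scoped ContDiff

variable {f g : ℝ → ℝ → ℝ} {U : Set (ℝ × ℝ)} {x t : ℝ} {n m : WithTop ℕ∞}

theorem hasDerivAt_fderiv_fst (h : DifferentiableAt ℝ (fun q : ℝ × ℝ => f q.1 q.2) (x, t)) :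
    HasDerivAt (fun y => f y t) (fderiv ℝ (fun q : ℝ × ℝ => f q.1 q.2) (x, t) (1, 0)) x :=
  h.hasFDerivAt.comp_hasDerivAt (f := fun y => (y, t)) x
    ((hasDerivAt_id' x).prodMk (hasDerivAt_const x t))

theorem hasDerivAt_fderiv_snd (h : DifferentiableAt ℝ (fun q : ℝ × ℝ => f q.1 q.2) (x, t)) :
    HasDerivAt (fun s => f x s) (fderiv ℝ (fun q : ℝ × ℝ => f q.1 q.2) (x, t) (0, 1)) t :=
  h.hasFDerivAt.comp_hasDerivAt (f := fun s => (x, s)) t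
    ((hasDerivAt_const t x).prodMk (hasDerivAt_id' t))

theorem pdx_eq_fderiv (h : DifferentiableAt ℝ (fun q : ℝ × ℝ => f q.1 q.2) (x, t)) :
    pdx f x t = fderiv ℝ (fun q : ℝ × ℝ => f q.1 q.2) (x, t) (1, 0) :=
  (hasDerivAt_fderiv_fst h).deriv

theorem pdt_eq_fderiv (h : DifferentiableAt ℝ (fun q : ℝ × ℝ => f q.1 q.2) (x, t)) :
    pdt f x t = fderiv ℝ (fun q : ℝ × ℝ => f q.1 q.2) (x, t) (0, 1) :=
  (hasDerivAt_fderiv_snd h).deriv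

theorem hasDerivAt_pdx_s9 (h : DifferentiableAt ℝ (fun q : ℝ × ℝ => f q.1 q.2) (x, t)) :
    HasDerivAt (fun y => f y t) (pdx f x t) x :=
  pdx_eq_fderiv h ▸ hasDerivAt_fderiv_fst h

theorem hasDerivAt_pdt_s9 (h : DifferentiableAt ℝ (fun q : ℝ × ℝ => f q.1 q.2) (x, t)) :
    HasDerivAt (fun s => f x s) (pdt f x t) t :=
  pdt_eq_fderiv h ▸ hasDerivAt_fderiv_snd h

theorem pdx_congr (hU : IsOpen U) (h : EqOn (fun q : ℝ × ℝ => f q.1 q.2) (fun q => g q.1 q.2) U)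
    (hq : (x, t) ∈ U) : pdx f x t = pdx g x t := by
  have hslice : ∀ᶠ y in 𝓝 x, (y, t) ∈ U :=
    (continuous_id.prodMk continuous_const).continuousAt.preimage_mem_nhds (hU.mem_nhds hq)
  exact Filter.EventuallyEq.deriv_eq (hslice.mono fun y hy => h hy)

theorem pdt_congr (hU : IsOpen U) (h : EqOn (fun q : ℝ × ℝ => f q.1 q.2) (fun q => g q.1 q.2) U)
    (hq : (x, t) ∈ U) : pdt f x t = pdt g x t := by
  have hslice : ∀ᶠ s in 𝓝 t, (x, s) ∈ U :=
    (continuous_const.prodMk continuous_id).continuousAt.preimage_mem_nhds (hU.mem_nhds hq)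
  exact Filter.EventuallyEq.deriv_eq (hslice.mono fun s hs => h hs)

namespace ContDiffOn

variable (hU : IsOpen U) (hf : ContDiffOn ℝ n (fun q : ℝ × ℝ => f q.1 q.2) U)
include hU hf

theorem differentiableAt_of_isOpen (hn : 1 ≤ n) {q : ℝ × ℝ} (hq : q ∈ U) :
    DifferentiableAt ℝ (fun q : ℝ × ℝ => f q.1 q.2) q :=
  (hf.differentiableOn (zero_lt_one.trans_le hn).ne').differentiableAt (hU.mem_nhds hq)

theorem pdx (hmn : m + 1 ≤ n) : ContDiffOn ℝ m (fun q : ℝ × ℝ => _root_.pdx f q.1 q.2) U :=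
  ((hf.fderiv_of_isOpen hU hmn).clm_apply contDiffOn_const).congr fun _ hq =>
    pdx_eq_fderiv (hf.differentiableAt_of_isOpen hU (le_add_self.trans hmn) hq)

theorem pdt (hmn : m + 1 ≤ n) : ContDiffOn ℝ m (fun q : ℝ × ℝ => _root_.pdt f q.1 q.2) U :=
  ((hf.fderiv_of_isOpen hU hmn).clm_apply contDiffOn_const).congr fun _ hq =>
    pdt_eq_fderiv (hf.differentiableAt_of_isOpen hU (le_add_self.trans hmn) hq)

end ContDiffOn

theorem pdt_pdx_comm (hU : IsOpen U) (hf : ContDiffOn ℝ n (fun q : ℝ × ℝ => f q.1 q.2) U)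
    (hn : 2 ≤ n) (hq : (x, t) ∈ U) : pdt (pdx f) x t = pdx (pdt f) x t := by
  set F := fun q : ℝ × ℝ => f q.1 q.2
  have hF : ∀ q ∈ U, DifferentiableAt ℝ F q :=
    fun q => hf.differentiableAt_of_isOpen hU (one_le_two.trans hn)
  have hF2 : ContDiffAt ℝ 2 F (x, t) := (hf.contDiffAt (hU.mem_nhds hq)).of_le hn
  have hF' : DifferentiableAt ℝ (fderiv ℝ F) (x, t) :=
    (hF2.fderiv_right (m := 1) le_rfl).differentiableAt one_ne_zero
  have hpdx : ∀ v,
      pdx (fun y s => fderiv ℝ F (y, s) v) x t = fderiv ℝ (fderiv ℝ F) (x, t) (1, 0) v := by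
    intro v
    rw [pdx_eq_fderiv (hF'.clm_apply (differentiableAt_const v)),
      fderiv_clm_apply hF' (differentiableAt_const v)]
    simp
  have hpdt : ∀ v,
      pdt (fun y s => fderiv ℝ F (y, s) v) x t = fderiv ℝ (fderiv ℝ F) (x, t) (0, 1) v := by
    intro v
    rw [pdt_eq_fderiv (hF'.clm_apply (differentiableAt_const v)),
      fderiv_clm_apply hF' (differentiableAt_const v)]
    simp
  calc pdt (pdx f) x t = pdt (fun y s => fderiv ℝ F (y, s) (1, 0)) x t :=
        pdt_congr hU (fun q hq => pdx_eq_fderiv (hF q hq)) hq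
    _ = fderiv ℝ (fderiv ℝ F) (x, t) (1, 0) (0, 1) :=
        (hpdt _).trans (hF2.isSymmSndFDerivAt (by simp) _ _)
    _ = pdx (fun y s => fderiv ℝ F (y, s) (0, 1)) x t := (hpdx _).symm
    _ = pdx (pdt f) x t := pdx_congr hU (fun q hq => (pdt_eq_fderiv (hF q hq)).symm) hq

theorem HasDerivAt.eq_zero_of_eqOn_zero {φ : ℝ → ℝ} {d τ : ℝ} {s : Set ℝ}
    (hd : HasDerivAt φ d τ) (hs : UniqueDiffWithinAt ℝ s τ) (hτ : τ ∈ s) (hφ : EqOn φ 0 s) :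
    d = 0 :=
  hs.eq_deriv s hd.hasDerivWithinAt ((hasDerivWithinAt_const τ s 0).congr hφ (hφ hτ))

theorem pdt_eq_zero_of_forall_Icc {T : ℝ} (hT : 0 < T) (hτ : t ∈ Icc 0 T)
    (hf : DifferentiableAt ℝ (fun q : ℝ × ℝ => f q.1 q.2) (x, t))
    (h0 : ∀ s ∈ Icc 0 T, f x s = 0) : pdt f x t = 0 :=
  (hasDerivAt_pdt_s9 hf).eq_zero_of_eqOn_zero (uniqueDiffOn_Icc hT t hτ) hτ h0

theorem intervalIntegrable_slice_fst {a b c d : ℝ} (hab : a ≤ b)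
    (hf : ContinuousOn (fun q : ℝ × ℝ => f q.1 q.2) (Icc a b ×ˢ Icc c d)) (ht : t ∈ Icc c d) :
    IntervalIntegrable (fun y => f y t) volume a b :=
  (hf.comp (Continuous.continuousOn (by fun_prop)) fun _ hy => mk_mem_prod hy ht)
    |>.intervalIntegrable_of_Icc hab

theorem intervalIntegrable_slice_snd {a b c d : ℝ} (hcd : c ≤ d)
    (hf : ContinuousOn (fun q : ℝ × ℝ => f q.1 q.2) (Icc a b ×ˢ Icc c d)) (hx : x ∈ Icc a b) :
    IntervalIntegrable (fun s => f x s) volume c d :=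
  (hf.comp (Continuous.continuousOn (by fun_prop)) fun _ hs => mk_mem_prod hx hs)
    |>.intervalIntegrable_of_Icc hcd

theorem intervalIntegral_swap_of_continuousOn {a b c d : ℝ}
    (hf : ContinuousOn (fun q : ℝ × ℝ => f q.1 q.2) (uIcc a b ×ˢ uIcc c d)) :
    ∫ x in a..b, ∫ y in c..d, f x y = ∫ y in c..d, ∫ x in a..b, f x y :=
  intervalIntegral_intervalIntegral_swap <|
    (hf.integrableOn_compact (isCompact_uIcc.prod isCompact_uIcc)).mono_set
      (prod_mono uIoc_subset_uIcc uIoc_subset_uIcc)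

theorem integral_eq_integral_add_of_pdt_eq {e F g : ℝ → ℝ → ℝ} {L T : ℝ} (hU : IsOpen U)
    (hL : 0 ≤ L) (hsub : Icc 0 L ×ˢ Icc 0 T ⊆ U)
    (he : ContDiffOn ℝ 1 (fun q : ℝ × ℝ => e q.1 q.2) U)
    (hF : ContDiffOn ℝ 1 (fun q : ℝ × ℝ => F q.1 q.2) U)
    (hbal : ∀ x ∈ Icc 0 L, ∀ τ ∈ Icc 0 T, pdt e x τ = g x τ + pdx F x τ)
    (hflux : ∀ τ ∈ Icc 0 T, F 0 τ = F L τ) (ht : t ∈ Icc 0 T) :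
    ∫ x in 0..L, e x t = (∫ x in 0..L, e x 0) + ∫ τ in 0..t, ∫ x in 0..L, g x τ := by
  have hR : Icc 0 L ×ˢ Icc 0 t ⊆ U := (prod_mono subset_rfl (Icc_subset_Icc_right ht.2)).trans hsub
  have he_cont := he.continuousOn.mono hR
  have he_t := ((he.pdt hU (m := 0) (by norm_num)).continuousOn).mono hR
  have hF_x := ((hF.pdx hU (m := 0) (by norm_num)).continuousOn).mono hR
  have hFTC_t : ∀ x ∈ Icc 0 L, ∫ τ in 0..t, pdt e x τ = e x t - e x 0 := fun x hx =>
    intervalIntegral.integral_eq_sub_of_hasDerivAt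
      (fun τ hτ => hasDerivAt_pdt_s9 (he.differentiableAt_of_isOpen hU le_rfl
        (hR ⟨hx, by rwa [uIcc_of_le ht.1] at hτ⟩)))
      (intervalIntegrable_slice_snd ht.1 he_t hx)
  have hFTC_x : ∀ τ ∈ Icc 0 t, ∫ x in 0..L, pdx F x τ = 0 := fun τ hτ => by
    rw [intervalIntegral.integral_eq_sub_of_hasDerivAt
      (fun x hx => hasDerivAt_pdx_s9 (hF.differentiableAt_of_isOpen hU le_rfl
        (hR ⟨by rwa [uIcc_of_le hL] at hx, hτ⟩)))
      (intervalIntegrable_slice_fst hL hF_x hτ), hflux τ (Icc_subset_Icc_right ht.2 hτ), sub_self]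
  have hslice : ∀ τ ∈ Icc 0 t, ∫ x in 0..L, pdt e x τ = ∫ x in 0..L, g x τ := fun τ hτ => by
    have hg : ∫ x in 0..L, g x τ = ∫ x in 0..L, (pdt e x τ - pdx F x τ) := by
      refine intervalIntegral.integral_congr fun x hx => ?_
      rw [uIcc_of_le hL] at hx
      exact eq_sub_of_add_eq (hbal x hx τ (Icc_subset_Icc_right ht.2 hτ)).symm
    rw [hg, intervalIntegral.integral_sub (intervalIntegrable_slice_fst hL he_t hτ)
      (intervalIntegrable_slice_fst hL hF_x hτ), hFTC_x τ hτ, sub_zero]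
  calc ∫ x in 0..L, e x t
      = (∫ x in 0..L, e x 0) + ∫ x in 0..L, (e x t - e x 0) := by
        rw [intervalIntegral.integral_sub
          (intervalIntegrable_slice_fst hL he_cont (right_mem_Icc.2 ht.1))
          (intervalIntegrable_slice_fst hL he_cont (left_mem_Icc.2 ht.1))]
        ring
    _ = (∫ x in 0..L, e x 0) + ∫ x in 0..L, ∫ τ in 0..t, pdt e x τ := by
        congr 1
        refine intervalIntegral.integral_congr fun x hx => (hFTC_t x ?_).symm
        rwa [uIcc_of_le hL] at hx
    _ = (∫ x in 0..L, e x 0) + ∫ τ in 0..t, ∫ x in 0..L, g x τ := by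
        rw [intervalIntegral_swap_of_continuousOn (by rwa [uIcc_of_le hL, uIcc_of_le ht.1])]
        congr 1
        refine intervalIntegral.integral_congr fun τ hτ => hslice τ ?_
        rwa [uIcc_of_le ht.1] at hτ

noncomputable def energyDensity (D : ℝ) (w : ℝ → ℝ → ℝ) : ℝ → ℝ → ℝ := fun x t =>
  (1/2) * (pdt w x t) ^ 2 + (D/2) * (pdx (pdx w) x t) ^ 2
    + (D/2) * (pdx w x t * pdx (pdx w) x t) ^ 2

/-- The flux `F` of the energy balance `∂ₜe = p w_t + ∂ₓF`: with `A = w_xx² w_x`, `B = w_x² w_xx`,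
`D w_t (∂ₓ⁴w - ∂ₓA + ∂ₓ²B) = D w_xx w_xxt + D (w_x w_xx) (w_x w_xx)_t - ∂ₓF`. -/
noncomputable def energyFlux (D : ℝ) (w : ℝ → ℝ → ℝ) : ℝ → ℝ → ℝ := fun x t =>
  D * (pdx (pdt w) x t * pdx (pdx w) x t - pdt w x t * pdx (pdx (pdx w)) x t
    + pdt w x t * (fun y s => (pdx (pdx w) y s) ^ 2 * pdx w y s) x t
    - pdt w x t * pdx (fun y s => (pdx w y s) ^ 2 * pdx (pdx w) y s) x t
    + pdx (pdt w) x t * (fun y s => (pdx w y s) ^ 2 * pdx (pdx w) y s) x t)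

theorem energyFlux_eq_zero_of_pdt_eq_zero {D : ℝ} {w : ℝ → ℝ → ℝ}
    (h0 : pdt w x t = 0) (h1 : pdx (pdt w) x t = 0) : energyFlux D w x t = 0 := by
  simp [energyFlux, h0, h1]

section Energy

variable {D : ℝ} {w : ℝ → ℝ → ℝ}
  (hU : IsOpen U) (hw : ContDiffOn ℝ ∞ (fun q : ℝ × ℝ => w q.1 q.2) U)
include hU hw

theorem pdt_energyDensity (hq : (x, t) ∈ U) :
    pdt (energyDensity D w) x t = stiffOp D w x t * pdt w x t + pdx (energyFlux D w) x t := by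
  have hd : ∀ {φ : ℝ → ℝ → ℝ}, ContDiffOn ℝ ∞ (fun q : ℝ × ℝ => φ q.1 q.2) U →
      DifferentiableAt ℝ (fun q : ℝ × ℝ => φ q.1 q.2) (x, t) :=
    fun h => h.differentiableAt_of_isOpen hU ENat.LEInfty.out hq
  have w1 := hw.pdx hU (m := ∞) le_rfl
  have w2 := w1.pdx hU (m := ∞) le_rfl
  have w3 := w2.pdx hU (m := ∞) le_rfl
  have v0 := hw.pdt hU (m := ∞) le_rfl
  have v1 := v0.pdx hU (m := ∞) le_rfl
  set A : ℝ → ℝ → ℝ := fun y s => (pdx (pdx w) y s) ^ 2 * pdx w y s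
  set B : ℝ → ℝ → ℝ := fun y s => (pdx w y s) ^ 2 * pdx (pdx w) y s
  have hA : ContDiffOn ℝ ∞ (fun q : ℝ × ℝ => A q.1 q.2) U := by fun_prop
  have hB : ContDiffOn ℝ ∞ (fun q : ℝ × ℝ => B q.1 q.2) U := by fun_prop
  have hB1 := hB.pdx hU (m := ∞) le_rfl
  have hw1t : pdt (pdx w) x t = pdx (pdt w) x t := pdt_pdx_comm hU hw ENat.LEInfty.out hq
  have hw2t : pdt (pdx (pdx w)) x t = pdx (pdx (pdt w)) x t :=
    (pdt_pdx_comm hU w1 ENat.LEInfty.out hq).trans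
      (pdx_congr hU (fun q hq => pdt_pdx_comm hU hw ENat.LEInfty.out hq) hq)
  have he := (((hasDerivAt_pdt_s9 (hd v0)).pow 2).const_mul (1/2 : ℝ)).add
    (((hasDerivAt_pdt_s9 (hd w2)).pow 2).const_mul (D/2)) |>.add
    ((((hasDerivAt_pdt_s9 (hd w1)).mul (hasDerivAt_pdt_s9 (hd w2))).pow 2).const_mul (D/2))
  have hF := (((((hasDerivAt_pdx_s9 (hd v1)).mul (hasDerivAt_pdx_s9 (hd w2))).sub
    ((hasDerivAt_pdx_s9 (hd v0)).mul (hasDerivAt_pdx_s9 (hd w3)))).add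
    ((hasDerivAt_pdx_s9 (hd v0)).mul (hasDerivAt_pdx_s9 (hd hA)))).sub
    ((hasDerivAt_pdx_s9 (hd v0)).mul (hasDerivAt_pdx_s9 (hd hB1)))).add
    ((hasDerivAt_pdx_s9 (hd v1)).mul (hasDerivAt_pdx_s9 (hd hB))) |>.const_mul D
  rw [show pdt (energyDensity D w) x t = _ from he.deriv,
    show pdx (energyFlux D w) x t = _ from hF.deriv, hw1t, hw2t, stiffOp]
  simp only [Pi.mul_apply, A, B]
  push_cast
  ring

theorem contDiffOn_energyDensity :
    ContDiffOn ℝ ∞ (fun q : ℝ × ℝ => energyDensity D w q.1 q.2) U := by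
  have w1 := hw.pdx hU (m := ∞) le_rfl
  have w2 := w1.pdx hU (m := ∞) le_rfl
  have v0 := hw.pdt hU (m := ∞) le_rfl
  unfold energyDensity
  fun_prop

theorem contDiffOn_energyFlux :
    ContDiffOn ℝ ∞ (fun q : ℝ × ℝ => energyFlux D w q.1 q.2) U := by
  have w1 := hw.pdx hU (m := ∞) le_rfl
  have w2 := w1.pdx hU (m := ∞) le_rfl
  have w3 := w2.pdx hU (m := ∞) le_rfl
  have v0 := hw.pdt hU (m := ∞) le_rfl
  have v1 := v0.pdx hU (m := ∞) le_rfl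
  set B : ℝ → ℝ → ℝ := fun y s => (pdx w y s) ^ 2 * pdx (pdx w) y s
  have hB : ContDiffOn ℝ ∞ (fun q : ℝ × ℝ => B q.1 q.2) U := by fun_prop
  have hB1 := hB.pdx hU (m := ∞) le_rfl
  unfold energyFlux
  fun_prop

theorem energyFlux_eq_zero_of_clamped {T : ℝ} (hT : 0 < T) (ht : t ∈ Icc 0 T) (hq : (x, t) ∈ U)
    (h0 : ∀ s ∈ Icc 0 T, w x s = 0) (h1 : ∀ s ∈ Icc 0 T, pdx w x s = 0) :
    energyFlux D w x t = 0 := by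
  have w1 := hw.pdx hU (m := ∞) le_rfl
  refine energyFlux_eq_zero_of_pdt_eq_zero
    (pdt_eq_zero_of_forall_Icc hT ht (hw.differentiableAt_of_isOpen hU ENat.LEInfty.out hq) h0) ?_
  rw [← pdt_pdx_comm hU hw ENat.LEInfty.out hq]
  exact pdt_eq_zero_of_forall_Icc hT ht (w1.differentiableAt_of_isOpen hU ENat.LEInfty.out hq) h1

theorem energyFlux_eq_zero_of_free (hq : (x, t) ∈ U) (h2 : pdx (pdx w) x t = 0)
    (h3 : pdx (pdx (pdx w)) x t = 0) : energyFlux D w x t = 0 := by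
  have w1 := hw.pdx hU (m := ∞) le_rfl
  have w2 := w1.pdx hU (m := ∞) le_rfl
  have hB := ((hasDerivAt_pdx_s9 (w1.differentiableAt_of_isOpen hU ENat.LEInfty.out hq)).pow 2).mul
    (hasDerivAt_pdx_s9 (w2.differentiableAt_of_isOpen hU ENat.LEInfty.out hq))
  have hB1 : pdx (fun y s => (pdx w y s) ^ 2 * pdx (pdx w) y s) x t = 0 := by
    rw [show pdx (fun y s => (pdx w y s) ^ 2 * pdx (pdx w) y s) x t = _ from hB.deriv, h2, h3]
    simp
  simp [energyFlux, h2, h3, hB1]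

theorem integral_energyDensity {L T : ℝ} (hL : 0 ≤ L) (hsub : Icc 0 L ×ˢ Icc 0 T ⊆ U)
    (ht : t ∈ Icc 0 T) :
    ∫ x in 0..L, energyDensity D w x t
      = (1/2) * (∫ x in 0..L, (pdt w x t) ^ 2)
        + (D/2) * (∫ x in 0..L, (pdx (pdx w) x t) ^ 2)
        + (D/2) * (∫ x in 0..L, (pdx w x t * pdx (pdx w) x t) ^ 2) := by
  have w1 := hw.pdx hU (m := ∞) le_rfl
  have w2 := w1.pdx hU (m := ∞) le_rfl
  have v0 := hw.pdt hU (m := ∞) le_rfl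
  have i1 := intervalIntegrable_slice_fst (f := fun x t => (pdt w x t) ^ 2) hL
    ((v0.pow 2).continuousOn.mono hsub) ht
  have i2 := intervalIntegrable_slice_fst (f := fun x t => (pdx (pdx w) x t) ^ 2) hL
    ((w2.pow 2).continuousOn.mono hsub) ht
  have i3 := intervalIntegrable_slice_fst (f := fun x t => (pdx w x t * pdx (pdx w) x t) ^ 2) hL
    (((w1.mul w2).pow 2).continuousOn.mono hsub) ht
  simp only [energyDensity]
  rw [intervalIntegral.integral_add ((i1.const_mul _).add (i2.const_mul _)) (i3.const_mul _),
    intervalIntegral.integral_add (i1.const_mul _) (i2.const_mul _),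
    intervalIntegral.integral_const_mul, intervalIntegral.integral_const_mul,
    intervalIntegral.integral_const_mul]

end Energy

theorem stiffness_energy_identity_general
    (L D T : ℝ) (hL : 0 < L) (hT : 0 < T)
    (p w : ℝ → ℝ → ℝ)
    (hw : IsStiffSol L D T p w) :
    ∀ t ∈ Icc (0:ℝ) T,
      (1/2) * (∫ x in (0:ℝ)..L, (pdt w x t) ^ 2)
        + (D/2) * (∫ x in (0:ℝ)..L, (pdx (pdx w) x t) ^ 2)
        + (D/2) * (∫ x in (0:ℝ)..L, (pdx w x t * pdx (pdx w) x t) ^ 2)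
      = (1/2) * (∫ x in (0:ℝ)..L, (pdt w x 0) ^ 2)
        + (D/2) * (∫ x in (0:ℝ)..L, (pdx (pdx w) x 0) ^ 2)
        + (D/2) * (∫ x in (0:ℝ)..L, (pdx w x 0 * pdx (pdx w) x 0) ^ 2)
        + ∫ τ in (0:ℝ)..t, ∫ x in (0:ℝ)..L, p x τ * pdt w x τ := by
  intro t ht
  obtain ⟨⟨U, hU, hsub, hwU⟩, hPDE, hBC⟩ := hw
  have hmem : ∀ x ∈ Icc 0 L, ∀ τ ∈ Icc 0 T, (x, τ) ∈ U := fun x hx τ hτ => hsub ⟨hx, hτ⟩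
  have hbal : ∀ x ∈ Icc 0 L, ∀ τ ∈ Icc 0 T,
      pdt (energyDensity D w) x τ = p x τ * pdt w x τ + pdx (energyFlux D w) x τ :=
    fun x hx τ hτ => by rw [pdt_energyDensity hU hwU (hmem x hx τ hτ), hPDE x hx τ hτ]
  have hflux : ∀ τ ∈ Icc 0 T, energyFlux D w 0 τ = energyFlux D w L τ := fun τ hτ => by
    obtain ⟨-, -, h2, h3⟩ := hBC τ hτ
    rw [energyFlux_eq_zero_of_clamped hU hwU hT hτ (hmem 0 (left_mem_Icc.2 hL.le) τ hτ)
        (fun s hs => (hBC s hs).1) (fun s hs => (hBC s hs).2.1),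
      energyFlux_eq_zero_of_free hU hwU (hmem L (right_mem_Icc.2 hL.le) τ hτ) h2 h3]
  rw [← integral_energyDensity hU hwU hL.le hsub ht,
    ← integral_energyDensity hU hwU hL.le hsub (left_mem_Icc.2 hT.le)]
  exact integral_eq_integral_add_of_pdt_eq hU hL.le hsub
    ((contDiffOn_energyDensity hU hwU).of_le ENat.LEInfty.out)
    ((contDiffOn_energyFlux hU hwU).of_le ENat.LEInfty.out) hbal hflux ht

/-- Energy identity for classical solutions of the stiffness-only system:
`E₀(t) = E₀(0) + ∫₀ᵗ ∫₀ᴸ p w_t dx dτ`. -/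
theorem stiffness_energy_identity
    (L D T : ℝ) (hL : 0 < L) (hD : 0 < D) (hT : 0 < T)
    (p w : ℝ → ℝ → ℝ) (hp : ContDiff ℝ (⊤ : ℕ∞) (fun q : ℝ × ℝ => p q.1 q.2))
    (hw : IsStiffSol L D T p w) :
    ∀ t ∈ Icc (0:ℝ) T,
      (1/2) * (∫ x in (0:ℝ)..L, (pdt w x t) ^ 2)
        + (D/2) * (∫ x in (0:ℝ)..L, (pdx (pdx w) x t) ^ 2)
        + (D/2) * (∫ x in (0:ℝ)..L, (pdx w x t * pdx (pdx w) x t) ^ 2)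
      = (1/2) * (∫ x in (0:ℝ)..L, (pdt w x 0) ^ 2)
        + (D/2) * (∫ x in (0:ℝ)..L, (pdx (pdx w) x 0) ^ 2)
        + (D/2) * (∫ x in (0:ℝ)..L, (pdx w x 0 * pdx (pdx w) x 0) ^ 2)
        + ∫ τ in (0:ℝ)..t, ∫ x in (0:ℝ)..L, p x τ * pdt w x τ :=
  stiffness_energy_identity_general L D T hL hT p w hw
end
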